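/- Let X(t) = Proj_K(X₀ + tV₀) be the Lagrangian sticky-particle flow with X₀ ∈ K and V₀ ∈ L²(0,1), and let ψ: ℝ → [0,+∞] be convex and lower semicontinuous. Then for any two initial data pairs, ∫₀¹ ψ(X¹(t) - X²(t)) dw ≤ ∫₀¹ ψ(X¹₀ - X²₀ + t(V¹₀ - V²₀)) dw for all t ≥ 0. -/

import Mathlib

/-!
Replace `ψ` by its Moreau envelopes `ψₙ x = inf_y ψ y + n/2 (x - y)²`: they are finite, convex and
semiconcave, and increase to `ψ` by lower semicontinuity. The right derivative `s` of `ψₙ` is then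
monotone and `n`-Lipschitz, so for `gᵢ = Proj_K fᵢ` both `n g₁ - s(g₁ - g₂)` and
`n g₂ + s(g₁ - g₂)` are nondecreasing. Testing the variational inequalities of the two projections
against them gives `∫ s(G) (F - G) ≥ 0` for `G = g₁ - g₂`, `F = f₁ - f₂`, and the subgradient
inequality `ψₙ G + s(G) (F - G) ≤ ψₙ F` yields `∫ ψₙ G ≤ ∫ ψₙ F`. Monotone convergence finishes.
-/

open MeasureTheory Set Filter

noncomputable section

/-- Lebesgue measure restricted to the interval (0,1). -/
def μ01 : MeasureTheory.Measure ℝ := MeasureTheory.volume.restrict (Set.Ioo 0 1)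

/-- The convex cone `K` of (essentially) nondecreasing functions in L²(0,1). -/
def coneK : Set (ℝ → ℝ) := {g | MonotoneOn g (Set.Ioo 0 1) ∧ MeasureTheory.MemLp g 2 μ01}

/-- `g` is the L²(0,1)-orthogonal projection of `f` onto the cone `K`,
characterized by the variational inequality `⟨f - g, z - g⟩ ≤ 0` for all `z ∈ K`. -/
def IsProjK (f g : ℝ → ℝ) : Prop :=
  g ∈ coneK ∧ ∀ z ∈ coneK, (∫ w in Set.Ioo (0:ℝ) 1, (f w - g w) * (z w - g w)) ≤ 0

/-- The convex envelope of `F` on `[0,1]`: the supremum of affine functions below `F` there. -/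
def convEnv (F : ℝ → ℝ) (w : ℝ) : ℝ :=
  sSup {y | ∃ a b : ℝ, y = a + b * w ∧ ∀ v ∈ Set.Icc (0:ℝ) 1, a + b * v ≤ F v}

/-- The open set `Ω_g ⊆ (0,1)` of points near which `g` is essentially constant. -/
def locConstSet (g : ℝ → ℝ) : Set ℝ :=
  {w | w ∈ Set.Ioo (0:ℝ) 1 ∧ ∃ a b c : ℝ, a < w ∧ w < b ∧
    ∀ᵐ x ∂μ01, x ∈ Set.Ioo a b → g x = c}

/-- The closed subspace `H_g` of L²(0,1) functions essentially constant on each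
open interval contained in `Ω_g`. -/
def Hspace (g : ℝ → ℝ) : Set (ℝ → ℝ) :=
  {u | MeasureTheory.MemLp u 2 μ01 ∧ ∀ a b : ℝ, Set.Ioo a b ⊆ locConstSet g →
    ∃ c : ℝ, ∀ᵐ x ∂μ01, x ∈ Set.Ioo a b → u x = c}

/-- `ξ` belongs to the subdifferential `∂I_K(g)` of the indicator function of `K` at `g ∈ K`. -/
def subdiffIK (g ξ : ℝ → ℝ) : Prop :=
  g ∈ coneK ∧ ∀ z ∈ coneK, (∫ w in Set.Ioo (0:ℝ) 1, ξ w * (z w - g w)) ≤ 0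

open scoped NNReal ENNReal

instance : IsFiniteMeasure μ01 := by
  unfold μ01; infer_instance

section Lp

variable {α : Type*} [MeasurableSpace α] {μ : Measure α}

lemma integrable_mul_of_memLp_two {u v : α → ℝ} (hu : MemLp u 2 μ) (hv : MemLp v 2 μ) :
    Integrable (fun w => u w * v w) μ :=
  hu.integrable_mul hv

lemma LipschitzWith.comp_memLp_of_isFiniteMeasure [IsFiniteMeasure μ] {K : ℝ≥0} {s : ℝ → ℝ}
    (hs : LipschitzWith K s) {p : ℝ≥0∞} {u : α → ℝ} (hu : MemLp u p μ) :
    MemLp (fun w => s (u w)) p μ := by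
  have hs0 : LipschitzWith K fun x => s x - s 0 := by
    simpa using hs.sub (LipschitzWith.const (s 0))
  convert (hs0.comp_memLp (by simp) hu).add (memLp_const (s 0)) using 1
  ext w
  simp

end Lp

lemma lipschitzWith_of_monotone_of_monotone_mul_sub {s : ℝ → ℝ} {c : ℝ≥0} (hs : Monotone s)
    (hcs : Monotone fun x => c * x - s x) : LipschitzWith c s := by
  refine LipschitzWith.of_dist_le_mul fun x y => ?_
  wlog hxy : x ≤ y generalizing x y
  · rw [dist_comm, dist_comm x]
    exact this y x (le_of_not_ge hxy)
  have h₁ := hs hxy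
  have h₂ : c * x - s x ≤ c * y - s y := hcs hxy
  rw [Real.dist_eq, Real.dist_eq, abs_sub_comm, abs_of_nonneg (by linarith),
    abs_sub_comm, abs_of_nonneg (by linarith)]
  linarith

section RightDeriv

variable {h : ℝ → ℝ}

lemma ConvexOn.monotone_rightDeriv_univ (hh : ConvexOn ℝ univ h) :
    Monotone fun x => derivWithin h (Ioi x) x := by
  simpa using hh.monotoneOn_rightDeriv

lemma ConvexOn.add_rightDeriv_mul_sub_le (hh : ConvexOn ℝ univ h) (a b : ℝ) :
    h a + derivWithin h (Ioi a) a * (b - a) ≤ h b := by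
  rcases lt_trichotomy a b with hab | rfl | hba
  · have hs := hh.rightDeriv_le_slope_of_mem_interior (by simp) (mem_univ b) hab
    rw [slope_def_field, le_div_iff₀ (sub_pos.2 hab)] at hs
    linarith
  · simp
  · have hs := (hh.slope_le_leftDeriv_of_mem_interior (mem_univ b) (by simp) hba).trans
      (hh.leftDeriv_le_rightDeriv_of_mem_interior (by simp))
    rw [slope_def_field, div_le_iff₀ (sub_pos.2 hba)] at hs
    linarith

/-- `c x - h'₊ x` is the right derivative of the convex function `c/2 x² - h`. -/
lemma ConvexOn.monotone_mul_sub_rightDeriv (hh : ConvexOn ℝ univ h) {c : ℝ}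
    (hk : ConvexOn ℝ univ fun x => c / 2 * x ^ 2 - h x) :
    Monotone fun x => c * x - derivWithin h (Ioi x) x := by
  have hderiv : ∀ x, derivWithin (fun x => c / 2 * x ^ 2 - h x) (Ioi x) x
      = c * x - derivWithin h (Ioi x) x := fun x => by
    have hq : HasDerivWithinAt (fun x => c / 2 * x ^ 2) (c * x) (Ioi x) x :=
      ((hasDerivAt_pow 2 x).const_mul (c / 2)).hasDerivWithinAt.congr_deriv (by norm_num; ring)
    exact (hq.sub (hh.hasDerivWithinAt_rightDeriv_of_mem_interior (by simp))).derivWithin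
      (uniqueDiffWithinAt_Ioi x)
  simpa only [hderiv] using hk.monotone_rightDeriv_univ

end RightDeriv

lemma mem_coneK_of_monotone₂ {Φ : ℝ → ℝ → ℝ} (hΦ₁ : ∀ b, Monotone fun a => Φ a b)
    (hΦ₂ : ∀ a, Monotone (Φ a)) {g₁ g₂ : ℝ → ℝ} (hg₁ : g₁ ∈ coneK) (hg₂ : g₂ ∈ coneK)
    (hΦg : MemLp (fun w => Φ (g₁ w) (g₂ w)) 2 μ01) : (fun w => Φ (g₁ w) (g₂ w)) ∈ coneK :=
  ⟨fun _ hw _ hw' hww' => (hΦ₁ _ (hg₁.1 hw hw' hww')).trans (hΦ₂ _ (hg₂.1 hw hw' hww')), hΦg⟩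

namespace IsProjK

variable {f g : ℝ → ℝ}

lemma integral_mul_sub_nonpos (hP : IsProjK f g) {z : ℝ → ℝ} (hz : z ∈ coneK) :
    ∫ w, (f w - g w) * (z w - g w) ∂μ01 ≤ 0 :=
  hP.2 z hz

lemma integral_mul_self_eq_zero (hP : IsProjK f g) : ∫ w, (f w - g w) * g w ∂μ01 = 0 := by
  have hzero : (0 : ℝ → ℝ) ∈ coneK := ⟨monotoneOn_const, memLp_const 0⟩
  have htwo : (fun w => 2 * g w) ∈ coneK :=
    ⟨fun _ hw _ hw' hww' => by simpa using hP.1.1 hw hw' hww', hP.1.2.const_mul 2⟩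
  have h₀ := hP.integral_mul_sub_nonpos hzero
  have h₂ := hP.integral_mul_sub_nonpos htwo
  simp only [Pi.zero_apply, zero_sub, mul_neg, integral_neg, neg_nonpos] at h₀
  simp only [two_mul, add_sub_cancel_right] at h₂
  exact le_antisymm h₂ h₀

/-- Testing against `a g + z ∈ K` isolates `z`, because `f - g ⟂ g`. -/
lemma integral_mul_nonpos {z : ℝ → ℝ} (hf : MemLp f 2 μ01) (hP : IsProjK f g) {a : ℝ}
    (hz : (fun w => a * g w + z w) ∈ coneK) : ∫ w, (f w - g w) * z w ∂μ01 ≤ 0 := by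
  have hfg : MemLp (fun w => f w - g w) 2 μ01 := hf.sub hP.1.2
  have hzL : MemLp z 2 μ01 := by
    convert hz.2.sub (hP.1.2.const_mul a) using 1
    ext w
    simp
  have hvi := hP.integral_mul_sub_nonpos hz
  have hsplit : ∀ w, (f w - g w) * ((a * g w + z w) - g w)
      = (a - 1) * ((f w - g w) * g w) + (f w - g w) * z w := fun w => by ring
  simp only [hsplit] at hvi
  rwa [integral_add ((integrable_mul_of_memLp_two hfg hP.1.2).const_mul _)
    (integrable_mul_of_memLp_two hfg hzL), integral_const_mul, hP.integral_mul_self_eq_zero,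
    mul_zero, zero_add] at hvi

end IsProjK

theorem integral_comp_sub_le_of_isProjK {h s : ℝ → ℝ} {c : ℝ≥0} (hs : Monotone s)
    (hcs : Monotone fun x => c * x - s x) (hsub : ∀ a b, h a + s a * (b - a) ≤ h b)
    {f₁ f₂ g₁ g₂ : ℝ → ℝ} (hf₁ : MemLp f₁ 2 μ01) (hf₂ : MemLp f₂ 2 μ01)
    (hP₁ : IsProjK f₁ g₁) (hP₂ : IsProjK f₂ g₂)
    (hhG : Integrable (fun w => h (g₁ w - g₂ w)) μ01)
    (hhF : Integrable (fun w => h (f₁ w - f₂ w)) μ01) :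
    ∫ w, h (g₁ w - g₂ w) ∂μ01 ≤ ∫ w, h (f₁ w - f₂ w) ∂μ01 := by
  have hsG : MemLp (fun w => s (g₁ w - g₂ w)) 2 μ01 :=
    (lipschitzWith_of_monotone_of_monotone_mul_sub hs hcs).comp_memLp_of_isFiniteMeasure
      (hP₁.1.2.sub hP₂.1.2)
  have hs₂ : ∀ {a a' b b' : ℝ}, a ≤ a' → b' ≤ b → s (a - b) ≤ s (a' - b') :=
    fun ha hb => hs (by linarith)
  have hcs₂ : ∀ {a a' b b' : ℝ}, a ≤ a' → b' ≤ b →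
      c * (a - b) - s (a - b) ≤ c * (a' - b') - s (a' - b') :=
    fun ha hb => hcs (by linarith)
  have hz₁ : (fun w => c * g₁ w + -s (g₁ w - g₂ w)) ∈ coneK := by
    refine mem_coneK_of_monotone₂ (Φ := fun a b => c * a + -s (a - b)) (fun b a a' ha => ?_)
      (fun a b b' hb => ?_) hP₁.1 hP₂.1 ((hP₁.1.2.const_mul _).add hsG.neg)
    · have := hcs₂ (b := b) ha le_rfl
      simp only
      linarith
    · have := hs₂ (a := a) le_rfl hb
      simp only
      linarith
  have hz₂ : (fun w => c * g₂ w + s (g₁ w - g₂ w)) ∈ coneK := by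
    refine mem_coneK_of_monotone₂ (Φ := fun a b => c * b + s (a - b)) (fun b a a' ha => ?_)
      (fun a b b' hb => ?_) hP₁.1 hP₂.1 ((hP₂.1.2.const_mul _).add hsG)
    · have := hs₂ (b := b) ha le_rfl
      simp only
      linarith
    · have := hcs₂ (a := a) le_rfl hb
      simp only
      linarith
  have h₁ : ∫ w, (f₁ w - g₁ w) * -s (g₁ w - g₂ w) ∂μ01 ≤ 0 := hP₁.integral_mul_nonpos hf₁ hz₁
  have h₂ : ∫ w, (f₂ w - g₂ w) * s (g₁ w - g₂ w) ∂μ01 ≤ 0 := hP₂.integral_mul_nonpos hf₂ hz₂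
  have hint₁ : Integrable (fun w => (f₁ w - g₁ w) * s (g₁ w - g₂ w)) μ01 :=
    integrable_mul_of_memLp_two (hf₁.sub hP₁.1.2) hsG
  have hint₂ : Integrable (fun w => (f₂ w - g₂ w) * s (g₁ w - g₂ w)) μ01 :=
    integrable_mul_of_memLp_two (hf₂.sub hP₂.1.2) hsG
  have hcross : 0 ≤ ∫ w, s (g₁ w - g₂ w) * ((f₁ w - f₂ w) - (g₁ w - g₂ w)) ∂μ01 := by
    have hsplit : ∀ w, s (g₁ w - g₂ w) * ((f₁ w - f₂ w) - (g₁ w - g₂ w))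
        = (f₁ w - g₁ w) * s (g₁ w - g₂ w) - (f₂ w - g₂ w) * s (g₁ w - g₂ w) :=
      fun w => by ring
    simp only [mul_neg, integral_neg, neg_nonpos] at h₁
    simp only [hsplit]
    rw [integral_sub hint₁ hint₂]
    linarith
  have hintcross : Integrable
      (fun w => s (g₁ w - g₂ w) * ((f₁ w - f₂ w) - (g₁ w - g₂ w))) μ01 :=
    integrable_mul_of_memLp_two hsG ((hf₁.sub hf₂).sub (hP₁.1.2.sub hP₂.1.2))
  calc ∫ w, h (g₁ w - g₂ w) ∂μ01
      ≤ ∫ w, h (g₁ w - g₂ w) ∂μ01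
          + ∫ w, s (g₁ w - g₂ w) * ((f₁ w - f₂ w) - (g₁ w - g₂ w)) ∂μ01 :=
        le_add_of_nonneg_right hcross
    _ = ∫ w, h (g₁ w - g₂ w) + s (g₁ w - g₂ w) * ((f₁ w - f₂ w) - (g₁ w - g₂ w)) ∂μ01 :=
        (integral_add hhG hintcross).symm
    _ ≤ ∫ w, h (f₁ w - f₂ w) ∂μ01 :=
        integral_mono (hhG.add hintcross) hhF fun w => hsub _ _

section MoreauEnvelope

variable {ψ : ℝ → ℝ≥0∞} {c : ℝ≥0} {y₀ : ℝ}

def moreauValues (ψ : ℝ → ℝ≥0∞) (c : ℝ≥0) (x : ℝ) : Set ℝ :=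
  (fun y => (ψ y).toReal + c / 2 * (x - y) ^ 2) '' {y | ψ y ≠ ⊤}

/-- Moreau envelope with parameter `1 / c`. The infimum runs over the effective domain `{ψ ≠ ⊤}`,
so `moreauEnv ψ c = 0` (as `sInf ∅`) when `ψ ≡ ⊤`. -/
def moreauEnv (ψ : ℝ → ℝ≥0∞) (c : ℝ≥0) (x : ℝ) : ℝ :=
  sInf (moreauValues ψ c x)

lemma bddBelow_moreauValues (x : ℝ) : BddBelow (moreauValues ψ c x) :=
  ⟨0, by rintro _ ⟨y, -, rfl⟩; positivity⟩

lemma moreauValues_nonempty (hy₀ : ψ y₀ ≠ ⊤) (x : ℝ) : (moreauValues ψ c x).Nonempty :=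
  ⟨_, y₀, hy₀, rfl⟩

lemma moreauEnv_le {y : ℝ} (hy : ψ y ≠ ⊤) (x : ℝ) :
    moreauEnv ψ c x ≤ (ψ y).toReal + c / 2 * (x - y) ^ 2 :=
  csInf_le (bddBelow_moreauValues x) ⟨y, hy, rfl⟩

lemma le_moreauEnv (hy₀ : ψ y₀ ≠ ⊤) {x r : ℝ}
    (hr : ∀ y, ψ y ≠ ⊤ → r ≤ (ψ y).toReal + c / 2 * (x - y) ^ 2) : r ≤ moreauEnv ψ c x :=
  le_csInf (moreauValues_nonempty hy₀ x) (by rintro _ ⟨y, hy, rfl⟩; exact hr y hy)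

lemma exists_lt_moreauEnv_add (hy₀ : ψ y₀ ≠ ⊤) (x : ℝ) {ε : ℝ} (hε : 0 < ε) :
    ∃ y, ψ y ≠ ⊤ ∧ (ψ y).toReal + c / 2 * (x - y) ^ 2 < moreauEnv ψ c x + ε := by
  obtain ⟨_, ⟨y, hy, rfl⟩, hlt⟩ := Real.lt_sInf_add_pos (moreauValues_nonempty (c := c) hy₀ x) hε
  exact ⟨y, hy, hlt⟩

lemma moreauEnv_nonneg (x : ℝ) : 0 ≤ moreauEnv ψ c x :=
  Real.sInf_nonneg (by rintro _ ⟨y, -, rfl⟩; positivity)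

lemma ofReal_moreauEnv_le (x : ℝ) : ENNReal.ofReal (moreauEnv ψ c x) ≤ ψ x := by
  by_cases hx : ψ x = ⊤
  · simp [hx]
  · rw [← ENNReal.ofReal_toReal hx]
    exact ENNReal.ofReal_le_ofReal (by simpa using moreauEnv_le (c := c) hx x)

lemma monotone_moreauEnv (hy₀ : ψ y₀ ≠ ⊤) (x : ℝ) : Monotone fun c => moreauEnv ψ c x := by
  refine fun c c' hcc' => le_moreauEnv hy₀ fun y hy => ?_
  have : (c : ℝ) / 2 * (x - y) ^ 2 ≤ c' / 2 * (x - y) ^ 2 := by gcongr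
  linarith [moreauEnv_le (c := c) hy x]

/-- Near `x`, `ψ > r` by lower semicontinuity; far from `x`, the penalty `n/2 (x - y)²` exceeds
`r` once `n` is large. -/
lemma iSup_ofReal_moreauEnv (hψl : LowerSemicontinuous ψ) (hy₀ : ψ y₀ ≠ ⊤) (x : ℝ) :
    ⨆ n : ℕ, ENNReal.ofReal (moreauEnv ψ n x) = ψ x := by
  refine le_antisymm (iSup_le fun n => ofReal_moreauEnv_le x)
    (le_of_forall_lt_imp_le_of_dense fun r hr => ?_)
  obtain ⟨δ, hδ, hball⟩ := Metric.eventually_nhds_iff.mp (hψl x r hr)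
  obtain ⟨n, hn⟩ := exists_nat_gt (2 * r.toReal / δ ^ 2)
  refine le_iSup_of_le n ?_
  rw [← ENNReal.ofReal_toReal (ne_top_of_lt hr)]
  refine ENNReal.ofReal_le_ofReal (le_moreauEnv hy₀ fun y hy => ?_)
  have hpen : 0 ≤ ((n : ℝ≥0) : ℝ) / 2 * (x - y) ^ 2 := by positivity
  by_cases hxy : dist y x < δ
  · linarith [ENNReal.toReal_mono hy (hball hxy).le]
  · have hδxy : δ ^ 2 ≤ (x - y) ^ 2 := by
      rw [not_lt, Real.dist_eq, abs_sub_comm] at hxy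
      simpa [sq_abs] using pow_le_pow_left₀ hδ.le hxy 2
    rw [div_lt_iff₀ (by positivity)] at hn
    push_cast
    nlinarith [ENNReal.toReal_nonneg (a := ψ y)]

/-- `c/2 x² - moreauEnv ψ c x = sup_y (c x y - c/2 y² - ψ y)` is a supremum of affine functions. -/
lemma convexOn_sq_sub_moreauEnv (hy₀ : ψ y₀ ≠ ⊤) :
    ConvexOn ℝ univ fun x => c / 2 * x ^ 2 - moreauEnv ψ c x := by
  refine ⟨convex_univ, fun x₁ _ x₂ _ a b ha hb hab => ?_⟩
  obtain rfl : b = 1 - a := by linarith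
  simp only [smul_eq_mul]
  suffices c / 2 * (a * x₁ + (1 - a) * x₂) ^ 2 - a * (c / 2 * x₁ ^ 2) - (1 - a) * (c / 2 * x₂ ^ 2)
      + a * moreauEnv ψ c x₁ + (1 - a) * moreauEnv ψ c x₂
      ≤ moreauEnv ψ c (a * x₁ + (1 - a) * x₂) by linarith
  refine le_moreauEnv hy₀ fun y hy => ?_
  have h₁ := mul_le_mul_of_nonneg_left (moreauEnv_le (c := c) hy x₁) ha
  have h₂ := mul_le_mul_of_nonneg_left (moreauEnv_le (c := c) hy x₂) hb
  have hid : c / 2 * (a * x₁ + (1 - a) * x₂ - y) ^ 2 = c / 2 * (a * x₁ + (1 - a) * x₂) ^ 2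
      - a * (c / 2 * x₁ ^ 2) - (1 - a) * (c / 2 * x₂ ^ 2)
      + a * (c / 2 * (x₁ - y) ^ 2) + (1 - a) * (c / 2 * (x₂ - y) ^ 2) := by ring
  linarith

section Convexity

variable (hψc : ∀ x y θ : ℝ, 0 ≤ θ → θ ≤ 1 →
  ψ (θ * x + (1 - θ) * y) ≤ ENNReal.ofReal θ * ψ x + ENNReal.ofReal (1 - θ) * ψ y)
include hψc

lemma toReal_comp_convexComb_le {y₁ y₂ θ : ℝ} (hθ₀ : 0 ≤ θ) (hθ₁ : θ ≤ 1) (hy₁ : ψ y₁ ≠ ⊤)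
    (hy₂ : ψ y₂ ≠ ⊤) :
    ψ (θ * y₁ + (1 - θ) * y₂) ≠ ⊤ ∧
      (ψ (θ * y₁ + (1 - θ) * y₂)).toReal ≤ θ * (ψ y₁).toReal + (1 - θ) * (ψ y₂).toReal := by
  have hfin₁ : ENNReal.ofReal θ * ψ y₁ ≠ ⊤ := by simp [ENNReal.mul_eq_top, hy₁]
  have hfin₂ : ENNReal.ofReal (1 - θ) * ψ y₂ ≠ ⊤ := by simp [ENNReal.mul_eq_top, hy₂]
  have hfin := ENNReal.add_ne_top.2 ⟨hfin₁, hfin₂⟩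
  have h := hψc y₁ y₂ θ hθ₀ hθ₁
  refine ⟨ne_top_of_le_ne_top hfin h, ?_⟩
  calc (ψ (θ * y₁ + (1 - θ) * y₂)).toReal
      ≤ (ENNReal.ofReal θ * ψ y₁ + ENNReal.ofReal (1 - θ) * ψ y₂).toReal :=
        ENNReal.toReal_mono hfin h
    _ = θ * (ψ y₁).toReal + (1 - θ) * (ψ y₂).toReal := by
        rw [ENNReal.toReal_add hfin₁ hfin₂, ENNReal.toReal_mul, ENNReal.toReal_mul,
          ENNReal.toReal_ofReal hθ₀, ENNReal.toReal_ofReal (by linarith)]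

/-- `moreauEnv ψ c` is the infimum over `y` of the jointly convex `ψ y + c/2 (x - y)²`. -/
lemma convexOn_moreauEnv (hy₀ : ψ y₀ ≠ ⊤) : ConvexOn ℝ univ (moreauEnv ψ c) := by
  refine ⟨convex_univ, fun x₁ _ x₂ _ a b ha hb hab => ?_⟩
  obtain rfl : b = 1 - a := by linarith
  simp only [smul_eq_mul]
  refine le_of_forall_pos_le_add fun ε hε => ?_
  obtain ⟨y₁, hy₁, h₁⟩ := exists_lt_moreauEnv_add (c := c) hy₀ x₁ hε
  obtain ⟨y₂, hy₂, h₂⟩ := exists_lt_moreauEnv_add (c := c) hy₀ x₂ hε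
  obtain ⟨hy, hψy⟩ := toReal_comp_convexComb_le hψc ha (by linarith) hy₁ hy₂
  have hsq : (a * x₁ + (1 - a) * x₂ - (a * y₁ + (1 - a) * y₂)) ^ 2
      ≤ a * (x₁ - y₁) ^ 2 + (1 - a) * (x₂ - y₂) ^ 2 := by
    nlinarith [mul_nonneg (mul_nonneg ha hb) (sq_nonneg (x₁ - y₁ - (x₂ - y₂)))]
  have hpen := mul_le_mul_of_nonneg_left hsq (by positivity : (0 : ℝ) ≤ c / 2)
  have h₁' := mul_le_mul_of_nonneg_left h₁.le ha
  have h₂' := mul_le_mul_of_nonneg_left h₂.le hb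
  have := moreauEnv_le (c := c) hy (a * x₁ + (1 - a) * x₂)
  nlinarith

lemma continuous_moreauEnv (hy₀ : ψ y₀ ≠ ⊤) : Continuous (moreauEnv ψ c) :=
  continuousOn_univ.mp ((convexOn_moreauEnv hψc hy₀).continuousOn isOpen_univ)

lemma integrable_moreauEnv_comp {α : Type*} [MeasurableSpace α] {μ : Measure α}
    [IsFiniteMeasure μ] (hy₀ : ψ y₀ ≠ ⊤) {u : α → ℝ} (hu : MemLp u 2 μ) :
    Integrable (fun w => moreauEnv ψ c (u w)) μ := by
  refine Integrable.mono' ((integrable_const (ψ y₀).toReal).add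
      (((hu.sub (memLp_const y₀)).integrable_sq).const_mul (c / 2)))
    ((continuous_moreauEnv hψc hy₀).comp_aestronglyMeasurable hu.aestronglyMeasurable)
    (ae_of_all _ fun w => ?_)
  rw [Real.norm_eq_abs, abs_of_nonneg (moreauEnv_nonneg _)]
  exact moreauEnv_le hy₀ _

lemma lintegral_ofReal_moreauEnv_le (hy₀ : ψ y₀ ≠ ⊤) (c : ℝ≥0) {f₁ f₂ g₁ g₂ : ℝ → ℝ}
    (hf₁ : MemLp f₁ 2 μ01) (hf₂ : MemLp f₂ 2 μ01) (hP₁ : IsProjK f₁ g₁) (hP₂ : IsProjK f₂ g₂) :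
    ∫⁻ w, ENNReal.ofReal (moreauEnv ψ c (g₁ w - g₂ w)) ∂μ01 ≤ ∫⁻ w, ψ (f₁ w - f₂ w) ∂μ01 := by
  have hconv := convexOn_moreauEnv (c := c) hψc hy₀
  have hG := integrable_moreauEnv_comp (c := c) hψc hy₀ (hP₁.1.2.sub hP₂.1.2)
  have hF := integrable_moreauEnv_comp (c := c) hψc hy₀ (hf₁.sub hf₂)
  calc ∫⁻ w, ENNReal.ofReal (moreauEnv ψ c (g₁ w - g₂ w)) ∂μ01
      = ENNReal.ofReal (∫ w, moreauEnv ψ c (g₁ w - g₂ w) ∂μ01) :=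
        (ofReal_integral_eq_lintegral_ofReal hG (ae_of_all _ fun _ => moreauEnv_nonneg _)).symm
    _ ≤ ENNReal.ofReal (∫ w, moreauEnv ψ c (f₁ w - f₂ w) ∂μ01) :=
        ENNReal.ofReal_le_ofReal <| integral_comp_sub_le_of_isProjK hconv.monotone_rightDeriv_univ
          (hconv.monotone_mul_sub_rightDeriv (convexOn_sq_sub_moreauEnv hy₀))
          hconv.add_rightDeriv_mul_sub_le hf₁ hf₂ hP₁ hP₂ hG hF
    _ = ∫⁻ w, ENNReal.ofReal (moreauEnv ψ c (f₁ w - f₂ w)) ∂μ01 :=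
        ofReal_integral_eq_lintegral_ofReal hF (ae_of_all _ fun _ => moreauEnv_nonneg _)
    _ ≤ ∫⁻ w, ψ (f₁ w - f₂ w) ∂μ01 := lintegral_mono fun _ => ofReal_moreauEnv_le _

theorem lintegral_comp_sub_le_of_isProjK (hψl : LowerSemicontinuous ψ) {f₁ f₂ g₁ g₂ : ℝ → ℝ}
    (hf₁ : MemLp f₁ 2 μ01) (hf₂ : MemLp f₂ 2 μ01) (hP₁ : IsProjK f₁ g₁) (hP₂ : IsProjK f₂ g₂) :
    ∫⁻ w, ψ (g₁ w - g₂ w) ∂μ01 ≤ ∫⁻ w, ψ (f₁ w - f₂ w) ∂μ01 := by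
  by_cases hψ : ∀ y, ψ y = ⊤
  · simp [hψ, μ01]
  obtain ⟨y₀, hy₀⟩ := not_forall.mp hψ
  have hmeas : ∀ n : ℕ, AEMeasurable
      (fun w => ENNReal.ofReal (moreauEnv ψ n (g₁ w - g₂ w))) μ01 := fun n =>
    ((continuous_moreauEnv hψc hy₀).measurable.comp_aemeasurable
      (hP₁.1.2.sub hP₂.1.2).aestronglyMeasurable.aemeasurable).ennreal_ofReal
  calc ∫⁻ w, ψ (g₁ w - g₂ w) ∂μ01
      = ∫⁻ w, ⨆ n : ℕ, ENNReal.ofReal (moreauEnv ψ n (g₁ w - g₂ w)) ∂μ01 := by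
        simp only [iSup_ofReal_moreauEnv hψl hy₀]
    _ = ⨆ n : ℕ, ∫⁻ w, ENNReal.ofReal (moreauEnv ψ n (g₁ w - g₂ w)) ∂μ01 :=
        lintegral_iSup' hmeas (ae_of_all _ fun _ _ _ hnm =>
          ENNReal.ofReal_le_ofReal (monotone_moreauEnv hy₀ _ (Nat.cast_le.mpr hnm)))
    _ ≤ ∫⁻ w, ψ (f₁ w - f₂ w) ∂μ01 :=
        iSup_le fun n => lintegral_ofReal_moreauEnv_le hψc hy₀ n hf₁ hf₂ hP₁ hP₂

end Convexity

end MoreauEnvelope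

theorem stmt18 (ψ : ℝ → ENNReal)
    (hψc : ∀ x y θ : ℝ, 0 ≤ θ → θ ≤ 1 →
      ψ (θ * x + (1 - θ) * y) ≤ ENNReal.ofReal θ * ψ x + ENNReal.ofReal (1 - θ) * ψ y)
    (hψl : LowerSemicontinuous ψ)
    (X₁ X₂ : ℝ → ℝ → ℝ) (X₀₁ X₀₂ V₀₁ V₀₂ : ℝ → ℝ)
    (hK₁ : X₀₁ ∈ coneK) (hK₂ : X₀₂ ∈ coneK)
    (hV₁ : MeasureTheory.MemLp V₀₁ 2 μ01) (hV₂ : MeasureTheory.MemLp V₀₂ 2 μ01)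
    (hflow₁ : ∀ t : ℝ, 0 ≤ t → IsProjK (fun w => X₀₁ w + t * V₀₁ w) (X₁ t))
    (hflow₂ : ∀ t : ℝ, 0 ≤ t → IsProjK (fun w => X₀₂ w + t * V₀₂ w) (X₂ t)) :
    ∀ t : ℝ, 0 ≤ t →
      (∫⁻ w in Set.Ioo (0:ℝ) 1, ψ (X₁ t w - X₂ t w)) ≤
        ∫⁻ w in Set.Ioo (0:ℝ) 1, ψ (X₀₁ w - X₀₂ w + t * (V₀₁ w - V₀₂ w)) := by
  intro t ht
  have hrhs : ∀ w, X₀₁ w - X₀₂ w + t * (V₀₁ w - V₀₂ w)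
      = (X₀₁ w + t * V₀₁ w) - (X₀₂ w + t * V₀₂ w) := fun w => by ring
  simp only [hrhs]
  exact lintegral_comp_sub_le_of_isProjK hψc hψl (hK₁.2.add (hV₁.const_mul t))
    (hK₂.2.add (hV₂.const_mul t)) (hflow₁ t ht) (hflow₂ t ht)
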